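/- arXiv:2306.12582 — 3 statements merged into one kernel-verified Lean document; each statement's English description precedes it below -/
import Mathlib

section
/- For every x, θ in ℝ^d, every y ∈ ℝ and every ε ≥ 0, the supremum of the squared linear-regression loss over an L2 ball of adversarial perturbations admits the closed form sup_{z : ‖z−x‖₂ ≤ ε} (zᵀθ − y)² = (|xᵀθ − y| + ε‖θ‖₂)². -/
open scoped RealInnerProductSpace
open Metric

/-!
By Cauchy–Schwarz, `|⟪z, θ⟫ - y| ≤ |⟪x, θ⟫ - y| + ‖z - x‖ ‖θ‖` on the ball, and the bound is
attained at `z = x ± ε θ / ‖θ‖`, the sign being that of the residual `⟪x, θ⟫ - y`. Squaring is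
monotone on nonnegative reals, so the greatest value of the squared loss is the square of this one.
-/

variable {E : Type*} [NormedAddCommGroup E] [InnerProductSpace ℝ E]

-- Both lemmas also hold for `θ = 0`, where `t / ‖θ‖ = 0`.
lemma inner_add_div_norm_smul_left (x θ : E) (t : ℝ) :
    ⟪x + (t / ‖θ‖) • θ, θ⟫ = ⟪x, θ⟫ + t * ‖θ‖ := by
  rcases eq_or_ne θ 0 with rfl | hθ
  · simp
  · rw [inner_add_left, real_inner_smul_left, real_inner_self_eq_norm_sq]
    field_simp

lemma norm_div_norm_smul_le (θ : E) (t : ℝ) : ‖(t / ‖θ‖) • θ‖ ≤ |t| := by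
  rcases eq_or_ne θ 0 with rfl | hθ
  · simp
  · rw [norm_smul, norm_div, norm_norm, div_mul_cancel₀ _ (norm_ne_zero_iff.mpr hθ),
      Real.norm_eq_abs]

lemma abs_inner_sub_le_of_mem_closedBall {x z θ : E} {ε : ℝ} (y : ℝ) (hz : z ∈ closedBall x ε) :
    |⟪z, θ⟫ - y| ≤ |⟪x, θ⟫ - y| + ε * ‖θ‖ :=
  calc |⟪z, θ⟫ - y| = |(⟪x, θ⟫ - y) + ⟪z - x, θ⟫| := by rw [inner_sub_left]; ring_nf
    _ ≤ |⟪x, θ⟫ - y| + ‖z - x‖ * ‖θ‖ :=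
      (abs_add_le _ _).trans (by gcongr; exact abs_real_inner_le_norm _ _)
    _ ≤ |⟪x, θ⟫ - y| + ε * ‖θ‖ := by gcongr; rwa [← dist_eq_norm]

lemma exists_mem_closedBall_abs_inner_sub_eq (x θ : E) (y : ℝ) {ε : ℝ} (hε : 0 ≤ ε) :
    ∃ z ∈ closedBall x ε, |⟪z, θ⟫ - y| = |⟪x, θ⟫ - y| + ε * ‖θ‖ := by
  set c := ⟪x, θ⟫ - y
  set s : ℝ := if 0 ≤ c then ε else -ε
  have hs : |s| = ε := by by_cases hc : 0 ≤ c <;> simp [s, hc, abs_of_nonneg hε]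
  refine ⟨x + (s / ‖θ‖) • θ, ?_, ?_⟩
  · rw [mem_closedBall, dist_eq_norm, add_sub_cancel_left, ← hs]
    exact norm_div_norm_smul_le θ s
  · rw [inner_add_div_norm_smul_left, add_sub_right_comm, (abs_add_eq_add_abs_iff _ _).mpr,
      abs_mul, hs, abs_norm]
    by_cases hc : 0 ≤ c
    · exact .inl ⟨hc, by simp [s, hc]; positivity⟩
    · exact .inr ⟨by linarith, by simp [s, hc]; positivity⟩

lemma isGreatest_abs_inner_sub_image_closedBall (x θ : E) (y : ℝ) {ε : ℝ} (hε : 0 ≤ ε) :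
    IsGreatest ((fun z => |⟪z, θ⟫ - y|) '' closedBall x ε) (|⟪x, θ⟫ - y| + ε * ‖θ‖) := by
  obtain ⟨z, hz, hmax⟩ := exists_mem_closedBall_abs_inner_sub_eq x θ y hε
  exact ⟨⟨z, hz, hmax⟩, by rintro _ ⟨w, hw, rfl⟩; exact abs_inner_sub_le_of_mem_closedBall y hw⟩

/-- For every `x, θ ∈ ℝ^d`, `y ∈ ℝ` and `ε ≥ 0`, the supremum of the squared
linear-regression loss over the closed Euclidean ball of adversarial perturbations admits the
closed form `sup_{‖z − x‖₂ ≤ ε} (zᵀθ − y)² = (|xᵀθ − y| + ε‖θ‖₂)²`. -/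
theorem adversarial_sq_loss_sup (d : ℕ) (x θ : EuclideanSpace ℝ (Fin d)) (y ε : ℝ)
    (hε : 0 ≤ ε) :
    sSup ((fun z : EuclideanSpace ℝ (Fin d) => (⟪z, θ⟫ - y) ^ 2) '' Metric.closedBall x ε)
      = (|⟪x, θ⟫ - y| + ε * ‖θ‖) ^ 2 := by
  have hsq : MonotoneOn (fun t : ℝ => t ^ 2) ((fun z => |⟪z, θ⟫ - y|) '' closedBall x ε) :=
    pow_left_monotoneOn.mono (by rintro _ ⟨z, -, rfl⟩; exact abs_nonneg (⟪z, θ⟫ - y))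
  have h := hsq.map_isGreatest (isGreatest_abs_inner_sub_image_closedBall x θ y hε)
  simp only [Set.image_image, sq_abs] at h
  exact h.csSup_eq
end

section
/- In the two-stage adversarial training with infinitely many generated data (n₂ = ∞), Σ = I_d, attack strength ε > 0, noise level σ² > 0 and clean ridge estimate θ̂₀(λ) ≠ 0, the second-stage estimator θ̃_ε(λ) — the minimizer over θ of R(θ) = ‖θ − θ̂₀(λ)‖₂² + σ² + 2 c₀ ε ‖θ‖₂ √(‖θ − θ̂₀(λ)‖₂² + σ²) + ε² ‖θ‖₂² — equals θ̃_ε(λ) = θ̂₀(λ)/(1 + α_ε(λ)), so that ‖θ̃_ε(λ)‖₂² = ‖θ̂₀(λ)‖₂²/(1+α_ε(λ))² and ‖θ̃_ε(λ) − θ₀‖₂² = ‖θ̂₀(λ)‖₂²/(1+α_ε(λ))² + ‖θ₀‖₂² − (2/(1+α_ε(λ))) θ̂₀(λ)ᵀθ₀, where α = α_ε(λ) ≥ 0 is the solution of α + ε c₀ α‖θ̂₀(λ)‖₂ / √( ‖θ̂₀(λ)‖₂² α² + σ²(1+α)² ) = ε c₀ √( ‖θ̂₀(λ)‖₂² α²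 + σ²(1+α)² ) / ‖θ̂₀(λ)‖₂ + ε². -/
/-! With `U(θ) = √(‖θ − θ̂₀‖² + σ²)` and `t(θ) = ‖θ‖` the risk is
`F(U, t) = U² + 2c₀εtU + ε²t² = (U + c₀εt)² + (1 − c₀²)ε²t²`, a convex quadratic form
(`c₀² = 2/π ≤ 1`) that increases in both arguments on the positive quadrant. Bounding `F` below
by its tangent plane at the candidate `θ*`, and then `U` and `t` below by their own tangent planes
(Cauchy–Schwarz), yields an affine minorant of the risk that touches it at `θ*`. The fixed-point
equation for `α` says precisely that this minorant has zero gradient, so it is constant. -/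

open scoped RealInnerProductSpace

/-- The population adversarial risk of `θ` when pseudo-responses are generated from the base
model `b` with noise variance `σ²` and standard Gaussian features (`c₀ = √(2/π)`). -/
noncomputable def advRisk {d : ℕ} (ε σ2 : ℝ) (b θ : EuclideanSpace ℝ (Fin d)) : ℝ :=
  ‖θ - b‖ ^ 2 + σ2 + 2 * Real.sqrt (2 / Real.pi) * ε * ‖θ‖ *
    Real.sqrt (‖θ - b‖ ^ 2 + σ2) + ε ^ 2 * ‖θ‖ ^ 2

open Real

def riskForm (c ε U t : ℝ) : ℝ := U ^ 2 + 2 * c * ε * t * U + ε ^ 2 * t ^ 2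

theorem riskForm_add_tangent_le {c : ℝ} (hc : c ^ 2 ≤ 1) (ε U₀ t₀ U t : ℝ) :
    riskForm c ε U₀ t₀ + 2 * (U₀ + c * ε * t₀) * (U - U₀)
        + 2 * (c * ε * U₀ + ε ^ 2 * t₀) * (t - t₀)
      ≤ riskForm c ε U t := by
  unfold riskForm
  linear_combination sq_nonneg (U - U₀ + c * ε * (t - t₀))
    + mul_nonneg (sub_nonneg.2 hc) (sq_nonneg (ε * (t - t₀)))

section LiftedNorm

variable {E : Type*} [NormedAddCommGroup E]

/-- The Euclidean norm of `(x, √σ2)` in `E × ℝ`. -/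
noncomputable def liftedNorm (σ2 : ℝ) (x : E) : ℝ := √(‖x‖ ^ 2 + σ2)

theorem liftedNorm_nonneg (σ2 : ℝ) (x : E) : 0 ≤ liftedNorm σ2 x := Real.sqrt_nonneg _

theorem liftedNorm_sq {σ2 : ℝ} (hσ2 : 0 ≤ σ2) (x : E) : liftedNorm σ2 x ^ 2 = ‖x‖ ^ 2 + σ2 :=
  Real.sq_sqrt (by positivity)

@[simp]
theorem liftedNorm_zero_left (x : E) : liftedNorm 0 x = ‖x‖ := by
  rw [liftedNorm, add_zero, Real.sqrt_sq (norm_nonneg x)]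

variable [InnerProductSpace ℝ E]

theorem real_inner_add_le_liftedNorm_mul {σ2 : ℝ} (hσ2 : 0 ≤ σ2) (x y : E) :
    ⟪x, y⟫ + σ2 ≤ liftedNorm σ2 x * liftedNorm σ2 y := by
  calc ⟪x, y⟫ + σ2 ≤ ‖x‖ * ‖y‖ + σ2 := by gcongr; exact real_inner_le_norm x y
    _ ≤ liftedNorm σ2 x * liftedNorm σ2 y := by
      rw [liftedNorm, liftedNorm, ← Real.sqrt_mul (by positivity)]
      apply Real.le_sqrt_of_sq_le
      nlinarith [mul_nonneg hσ2 (sq_nonneg (‖x‖ - ‖y‖))]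

theorem liftedNorm_add_inner_div_le {σ2 : ℝ} (hσ2 : 0 ≤ σ2) (x y : E) :
    liftedNorm σ2 x + ⟪x, y - x⟫ / liftedNorm σ2 x ≤ liftedNorm σ2 y := by
  rcases (liftedNorm_nonneg σ2 x).eq_or_lt with h | h
  · rw [← h, div_zero, zero_add]
    exact liftedNorm_nonneg σ2 y
  · have hsum : liftedNorm σ2 x + ⟪x, y - x⟫ / liftedNorm σ2 x
        = (⟪x, y⟫ + σ2) / liftedNorm σ2 x := by
      rw [inner_sub_right, real_inner_self_eq_norm_sq]
      field_simp
      rw [liftedNorm_sq hσ2]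
      ring
    rw [hsum, div_le_iff₀ h, mul_comm]
    exact real_inner_add_le_liftedNorm_mul hσ2 x y

theorem norm_add_inner_div_le (x y : E) : ‖x‖ + ⟪x, y - x⟫ / ‖x‖ ≤ ‖y‖ := by
  simpa using liftedNorm_add_inner_div_le le_rfl x y

theorem riskForm_le_of_stationary {c ε σ2 : ℝ} (hc : 0 ≤ c) (hc1 : c ^ 2 ≤ 1) (hε : 0 ≤ ε)
    (hσ2 : 0 ≤ σ2) {b θs : E}
    (hstat : ((liftedNorm σ2 (θs - b) + c * ε * ‖θs‖) / liftedNorm σ2 (θs - b)) • (θs - b)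
      + ((c * ε * liftedNorm σ2 (θs - b) + ε ^ 2 * ‖θs‖) / ‖θs‖) • θs = 0) (θ : E) :
    riskForm c ε (liftedNorm σ2 (θs - b)) ‖θs‖ ≤ riskForm c ε (liftedNorm σ2 (θ - b)) ‖θ‖ := by
  set U₀ := liftedNorm σ2 (θs - b)
  set t₀ := ‖θs‖
  have hU₀ : 0 ≤ U₀ := liftedNorm_nonneg σ2 _
  have hgU : 0 ≤ U₀ + c * ε * t₀ := by positivity
  have hgt : 0 ≤ c * ε * U₀ + ε ^ 2 * t₀ := by positivity
  have hU : U₀ + ⟪θs - b, θ - θs⟫ / U₀ ≤ liftedNorm σ2 (θ - b) := by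
    simpa only [sub_sub_sub_cancel_right] using liftedNorm_add_inner_div_le hσ2 (θs - b) (θ - b)
  have ht : t₀ + ⟪θs, θ - θs⟫ / t₀ ≤ ‖θ‖ := norm_add_inner_div_le θs θ
  have hzero : (U₀ + c * ε * t₀) * (⟪θs - b, θ - θs⟫ / U₀)
      + (c * ε * U₀ + ε ^ 2 * t₀) * (⟪θs, θ - θs⟫ / t₀) = 0 := by
    have := congrArg (fun v => ⟪v, θ - θs⟫) hstat
    simpa only [inner_add_left, real_inner_smul_left, inner_zero_left, mul_div_assoc',
      div_mul_eq_mul_div] using this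
  linear_combination riskForm_add_tangent_le hc1 ε U₀ t₀ (liftedNorm σ2 (θ - b)) ‖θ‖
    + 2 * mul_le_mul_of_nonneg_left hU hgU + 2 * mul_le_mul_of_nonneg_left ht hgt - 2 * hzero

end LiftedNorm

section Candidate

variable {E : Type*} [NormedAddCommGroup E] [NormedSpace ℝ E]

theorem one_div_one_add_smul_sub_self {α : ℝ} (hα : 1 + α ≠ 0) (b : E) :
    (1 / (1 + α)) • b - b = (-α) • (1 / (1 + α)) • b := by
  calc (1 / (1 + α)) • b - b = (1 / (1 + α) - 1) • b := by rw [sub_smul, one_smul]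
    _ = (-α) • (1 / (1 + α)) • b := by
      rw [smul_smul]
      congr 1
      field_simp
      ring

theorem norm_one_div_one_add_smul {α : ℝ} (hα : 0 ≤ α) (b : E) :
    ‖(1 / (1 + α)) • b‖ = ‖b‖ / (1 + α) := by
  rw [norm_smul, Real.norm_of_nonneg (by positivity), one_div_mul_eq_div]

theorem liftedNorm_one_div_one_add_smul_sub_self {α σ2 : ℝ} (hα : 0 ≤ α) (hσ2 : 0 ≤ σ2) (b : E) :
    liftedNorm σ2 ((1 / (1 + α)) • b - b) = √(‖b‖ ^ 2 * α ^ 2 + σ2 * (1 + α) ^ 2) / (1 + α) := by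
  have hq : 0 < 1 + α := by linarith
  rw [liftedNorm, one_div_one_add_smul_sub_self hq.ne', norm_smul, norm_one_div_one_add_smul hα,
    norm_neg, Real.norm_of_nonneg hα, Real.sqrt_eq_iff_eq_sq (by positivity) (by positivity),
    div_pow, Real.sq_sqrt (by positivity)]
  field_simp

end Candidate

theorem advRisk_eq_riskForm {d : ℕ} (ε : ℝ) {σ2 : ℝ} (hσ2 : 0 ≤ σ2)
    (b θ : EuclideanSpace ℝ (Fin d)) :
    advRisk ε σ2 b θ = riskForm √(2 / π) ε (liftedNorm σ2 (θ - b)) ‖θ‖ := by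
  rw [advRisk, riskForm, liftedNorm_sq hσ2, liftedNorm]

theorem sq_sqrt_two_div_pi_le_one : √(2 / π) ^ 2 ≤ 1 := by
  rw [Real.sq_sqrt (by positivity), div_le_one pi_pos]
  linarith [pi_gt_three]

/-- In the two-stage adversarial training with infinitely many generated data,
`Σ = I_d`, attack strength `ε > 0`, noise level `σ² > 0` and nonzero clean ridge estimate
`θ̂₀(λ)`, the second-stage estimator — the minimizer of the population adversarial risk
`R(θ) = ‖θ − θ̂₀‖₂² + σ² + 2c₀ε‖θ‖₂√(‖θ − θ̂₀‖₂² + σ²) + ε²‖θ‖₂²` — equals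
`θ̂₀/(1 + α)`, so that `‖θ̃‖₂² = ‖θ̂₀‖₂²/(1+α)²` and
`‖θ̃ − θ₀‖₂² = ‖θ̂₀‖₂²/(1+α)² + ‖θ₀‖₂² − (2/(1+α)) θ̂₀ᵀθ₀`, where `α ≥ 0` solves the
fixed-point equation
`α + εc₀α‖θ̂₀‖/√(‖θ̂₀‖²α² + σ²(1+α)²) = εc₀√(‖θ̂₀‖²α² + σ²(1+α)²)/‖θ̂₀‖ + ε²`. -/
theorem two_stage_second_stage_minimizer (d : ℕ) (θ₀ θhat : EuclideanSpace ℝ (Fin d))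
    (hθhat : θhat ≠ 0) (ε σ2 α : ℝ) (hε : 0 < ε) (hσ2 : 0 < σ2) (hα : 0 ≤ α)
    (hfix : α + ε * Real.sqrt (2 / Real.pi) * (α * ‖θhat‖)
          / Real.sqrt (‖θhat‖ ^ 2 * α ^ 2 + σ2 * (1 + α) ^ 2)
      = ε * Real.sqrt (2 / Real.pi)
          * Real.sqrt (‖θhat‖ ^ 2 * α ^ 2 + σ2 * (1 + α) ^ 2) / ‖θhat‖ + ε ^ 2) :
    (∀ θ : EuclideanSpace ℝ (Fin d),
        advRisk ε σ2 θhat ((1 / (1 + α)) • θhat) ≤ advRisk ε σ2 θhat θ)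
    ∧ ‖(1 / (1 + α)) • θhat‖ ^ 2 = ‖θhat‖ ^ 2 / (1 + α) ^ 2
    ∧ ‖(1 / (1 + α)) • θhat - θ₀‖ ^ 2
        = ‖θhat‖ ^ 2 / (1 + α) ^ 2 + ‖θ₀‖ ^ 2 - (2 / (1 + α)) * ⟪θhat, θ₀⟫ := by
  have hq : 0 < 1 + α := by linarith
  have hnorm := norm_one_div_one_add_smul hα θhat
  refine ⟨fun θ => ?_, by rw [hnorm, div_pow], ?_⟩
  · rw [advRisk_eq_riskForm ε hσ2.le, advRisk_eq_riskForm ε hσ2.le]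
    refine riskForm_le_of_stationary (Real.sqrt_nonneg _) sq_sqrt_two_div_pi_le_one hε.le hσ2.le
      ?_ θ
    have hB : 0 < ‖θhat‖ := norm_pos_iff.mpr hθhat
    have hS : 0 < √(‖θhat‖ ^ 2 * α ^ 2 + σ2 * (1 + α) ^ 2) := Real.sqrt_pos.mpr (by positivity)
    rw [liftedNorm_one_div_one_add_smul_sub_self hα hσ2.le, one_div_one_add_smul_sub_self hq.ne',
      smul_smul, ← add_smul, hnorm, smul_eq_zero]
    left
    field_simp at hfix ⊢
    linear_combination -hfix
  · rw [norm_sub_sq_real, real_inner_smul_left, hnorm, div_pow]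
    ring
end

section
/- Fix n ∈ ℕ, ε > 0, λ ≥ 0 with λ + ε² > 0, and v ∈ ℝ^n. Define ℓ̄_ε(v; θ) = (1/n) Σ_{i=1}^n [ (|v_i| + ε‖θ‖₂)² + λ‖θ‖₂² ] for θ ∈ ℝ^d. Then the Fenchel conjugate in θ satisfies, for every q ∈ ℝ^d, ℓ̄_ε*(v; q) := sup_{θ∈ℝ^d} ( qᵀθ − ℓ̄_ε(v; θ) ) = (ε²/((λ+ε²) n²)) ( (n/(2ε)) ‖q‖₂ − ‖v‖₁ )₊² − (1/n)‖v‖₂², where (z)₊ = max(z, 0). Consequently, the conjugate of Δ ↦ ℓ̄_ε(v; θ₀ + Δ) is q ↦ −qᵀθ₀ + ℓ̄_ε*(v; q). -/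
open scoped RealInnerProductSpace

open Set

/-!
The loss is a function of `r = ‖θ‖` alone, namely `b r + (λ + ε²) r² + ‖v‖₂²/n` with
`b = 2ε‖v‖₁/n`. For fixed `‖θ‖ = r` the pairing `⟪q, θ⟫` is maximised, by Cauchy–Schwarz, in
the direction of `q`, so the conjugate is the maximum over `r ≥ 0` of the concave parabola
`(‖q‖ - b) r - (λ + ε²) r²`, which is `(‖q‖ - b)₊² / (4(λ + ε²))`. Translating `θ = θ₀ + Δ`
only subtracts `⟪q, θ₀⟫`.
-/

lemma mul_sub_mul_sq_le_max_sq_div {a c r : ℝ} (hc : 0 < c) (hr : 0 ≤ r) :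
    a * r - c * r ^ 2 ≤ max a 0 ^ 2 / (4 * c) := by
  rw [le_div_iff₀ (by positivity)]
  nlinarith [sq_nonneg (max a 0 - 2 * c * r), le_max_left a 0,
    mul_le_mul_of_nonneg_right (le_max_left a 0) hr]

lemma mul_sub_mul_sq_max_div_eq {a c : ℝ} (hc : 0 < c) :
    a * (max a 0 / (2 * c)) - c * (max a 0 / (2 * c)) ^ 2 = max a 0 ^ 2 / (4 * c) := by
  have hmax : a * max a 0 = max a 0 ^ 2 := by
    rcases le_total a 0 with ha | ha <;> simp [ha, sq]
  rw [show a * (max a 0 / (2 * c)) = max a 0 ^ 2 / (2 * c) by rw [← hmax]; ring]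
  field_simp
  ring

section InnerProductSpace

variable {E : Type*} [NormedAddCommGroup E] [InnerProductSpace ℝ E]

lemma isGreatest_range_inner_sub_norm_sub_sq (q : E) {b c : ℝ} (hb : 0 ≤ b) (hc : 0 < c) :
    IsGreatest (range fun x : E => ⟪q, x⟫ - b * ‖x‖ - c * ‖x‖ ^ 2)
      (max (‖q‖ - b) 0 ^ 2 / (4 * c)) := by
  refine ⟨?_, ?_⟩
  · rcases le_or_gt ‖q‖ b with hqb | hqb
    · exact ⟨0, by simp [max_eq_right (sub_nonpos.mpr hqb)]⟩
    · set r := max (‖q‖ - b) 0 / (2 * c)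
      have hq : 0 < ‖q‖ := hb.trans_lt hqb
      refine ⟨(r / ‖q‖) • q, ?_⟩
      have hnorm : ‖(r / ‖q‖) • q‖ = r := by
        rw [norm_smul, Real.norm_of_nonneg (by positivity)]
        field_simp
      have hinner : ⟪q, (r / ‖q‖) • q⟫ = ‖q‖ * r := by
        rw [real_inner_smul_right, real_inner_self_eq_norm_sq]
        field_simp
      dsimp only
      rw [hnorm, hinner, ← mul_sub_mul_sq_max_div_eq hc]
      ring
  · rintro _ ⟨x, rfl⟩
    have := mul_sub_mul_sq_le_max_sq_div (a := ‖q‖ - b) hc (norm_nonneg x)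
    nlinarith [real_inner_le_norm q x]

end InnerProductSpace

lemma IsGreatest.range_sub_const {ι α : Type*} [AddCommGroup α] [PartialOrder α]
    [IsOrderedAddMonoid α] {f : ι → α} {m : α} (h : IsGreatest (range f) m) (a : α) :
    IsGreatest (range fun i => f i - a) (m - a) := by
  have hmono : Monotone fun x : α => x - a := fun _ _ hxy => sub_le_sub_right hxy a
  have := hmono.map_isGreatest h
  rwa [← range_comp] at this

lemma IsGreatest.range_comp_add_left {G α : Type*} [AddGroup G] [Preorder α] {f : G → α}
    {m : α} (h : IsGreatest (range f) m) (g : G) :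
    IsGreatest (range fun x => f (g + x)) m := by
  rwa [← (Equiv.addLeft g).surjective.range_comp f] at h

lemma mean_sq_abs_add_mul_add_mul_sq {ι : Type*} [Fintype ι] [Nonempty ι] (v : ι → ℝ)
    (ε lam s : ℝ) :
    (1 / (Fintype.card ι : ℝ)) * ∑ i, ((|v i| + ε * s) ^ 2 + lam * s ^ 2)
      = 2 * ε * (∑ i, |v i|) / Fintype.card ι * s + (lam + ε ^ 2) * s ^ 2
        + (1 / (Fintype.card ι : ℝ)) * ∑ i, v i ^ 2 := by
  have hterm : ∀ i, (|v i| + ε * s) ^ 2 + lam * s ^ 2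
      = v i ^ 2 + 2 * ε * s * |v i| + (lam + ε ^ 2) * s ^ 2 := fun i => by
    rw [← sq_abs (v i)]; ring
  simp only [hterm, Finset.sum_add_distrib, ← Finset.mul_sum, Finset.sum_const,
    Finset.card_univ, nsmul_eq_mul]
  field_simp
  ring

theorem adversarial_loss_fenchel_conjugate_general (n d : ℕ) (hn : 0 < n) (ε lam : ℝ)
    (hε : 0 < ε) (hsum : 0 < lam + ε ^ 2)
    (v : Fin n → ℝ) (q θ₀ : EuclideanSpace ℝ (Fin d)) :
    sSup (Set.range fun θ : EuclideanSpace ℝ (Fin d) =>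
        ⟪q, θ⟫ - (1 / (n : ℝ)) * ∑ i, ((|v i| + ε * ‖θ‖) ^ 2 + lam * ‖θ‖ ^ 2))
      = ε ^ 2 / ((lam + ε ^ 2) * (n : ℝ) ^ 2)
          * (max ((n : ℝ) / (2 * ε) * ‖q‖ - ∑ i, |v i|) 0) ^ 2
        - (1 / (n : ℝ)) * ∑ i, (v i) ^ 2
    ∧ sSup (Set.range fun Δ : EuclideanSpace ℝ (Fin d) =>
        ⟪q, Δ⟫ - (1 / (n : ℝ)) * ∑ i, ((|v i| + ε * ‖θ₀ + Δ‖) ^ 2 + lam * ‖θ₀ + Δ‖ ^ 2))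
      = -⟪q, θ₀⟫
        + (ε ^ 2 / ((lam + ε ^ 2) * (n : ℝ) ^ 2)
            * (max ((n : ℝ) / (2 * ε) * ‖q‖ - ∑ i, |v i|) 0) ^ 2
          - (1 / (n : ℝ)) * ∑ i, (v i) ^ 2) := by
  have : Nonempty (Fin n) := ⟨⟨0, hn⟩⟩
  have hloss := mean_sq_abs_add_mul_add_mul_sq v ε lam
  rw [Fintype.card_fin] at hloss
  set b := 2 * ε * (∑ i, |v i|) / n
  set K := (1 / (n : ℝ)) * ∑ i, v i ^ 2
  have hb : 0 ≤ b := by positivity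
  have hconj : IsGreatest (range fun θ : EuclideanSpace ℝ (Fin d) =>
      ⟪q, θ⟫ - (1 / (n : ℝ)) * ∑ i, ((|v i| + ε * ‖θ‖) ^ 2 + lam * ‖θ‖ ^ 2))
      (max (‖q‖ - b) 0 ^ 2 / (4 * (lam + ε ^ 2)) - K) := by
    simp only [hloss, ← sub_sub]
    exact (isGreatest_range_inner_sub_norm_sub_sq q hb hsum).range_sub_const K
  have hvalue : ε ^ 2 / ((lam + ε ^ 2) * (n : ℝ) ^ 2)
      * (max ((n : ℝ) / (2 * ε) * ‖q‖ - ∑ i, |v i|) 0) ^ 2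
      = max (‖q‖ - b) 0 ^ 2 / (4 * (lam + ε ^ 2)) := by
    have hmax : max ((n : ℝ) / (2 * ε) * ‖q‖ - ∑ i, |v i|) 0
        = n / (2 * ε) * max (‖q‖ - b) 0 := by
      rw [mul_max_of_nonneg _ _ (by positivity), mul_zero, mul_sub]
      congr 2
      simp only [b]
      field_simp
    rw [hmax]
    field_simp
    ring
  refine ⟨by rw [hconj.csSup_eq, hvalue], ?_⟩
  have hshift := (hconj.range_comp_add_left θ₀).range_sub_const ⟪q, θ₀⟫
  rw [hvalue, neg_add_eq_sub, ← hshift.csSup_eq]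
  congr 2 with Δ
  rw [inner_add_right]
  ring

/-- (Fenchel conjugate of the adversarial loss.) For `n ∈ ℕ`, `ε > 0`,
`λ ≥ 0` with `λ + ε² > 0` and `v ∈ ℝ^n`, let
`ℓ̄_ε(v; θ) = (1/n) Σᵢ [(|vᵢ| + ε‖θ‖₂)² + λ‖θ‖₂²]`. Then for every `q ∈ ℝ^d`,
`sup_θ (qᵀθ − ℓ̄_ε(v; θ)) = (ε²/((λ+ε²)n²)) ((n/(2ε))‖q‖₂ − ‖v‖₁)₊² − (1/n)‖v‖₂²`,
and the conjugate of `Δ ↦ ℓ̄_ε(v; θ₀ + Δ)` is `q ↦ −qᵀθ₀` plus the same expression. -/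
theorem adversarial_loss_fenchel_conjugate (n d : ℕ) (hn : 0 < n) (ε lam : ℝ)
    (hε : 0 < ε) (hlam : 0 ≤ lam) (hsum : 0 < lam + ε ^ 2)
    (v : Fin n → ℝ) (q θ₀ : EuclideanSpace ℝ (Fin d)) :
    sSup (Set.range fun θ : EuclideanSpace ℝ (Fin d) =>
        ⟪q, θ⟫ - (1 / (n : ℝ)) * ∑ i, ((|v i| + ε * ‖θ‖) ^ 2 + lam * ‖θ‖ ^ 2))
      = ε ^ 2 / ((lam + ε ^ 2) * (n : ℝ) ^ 2)
          * (max ((n : ℝ) / (2 * ε) * ‖q‖ - ∑ i, |v i|) 0) ^ 2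
        - (1 / (n : ℝ)) * ∑ i, (v i) ^ 2
    ∧ sSup (Set.range fun Δ : EuclideanSpace ℝ (Fin d) =>
        ⟪q, Δ⟫ - (1 / (n : ℝ)) * ∑ i, ((|v i| + ε * ‖θ₀ + Δ‖) ^ 2 + lam * ‖θ₀ + Δ‖ ^ 2))
      = -⟪q, θ₀⟫
        + (ε ^ 2 / ((lam + ε ^ 2) * (n : ℝ) ^ 2)
            * (max ((n : ℝ) / (2 * ε) * ‖q‖ - ∑ i, |v i|) 0) ^ 2
          - (1 / (n : ℝ)) * ∑ i, (v i) ^ 2) :=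
  adversarial_loss_fenchel_conjugate_general n d hn ε lam hε hsum v q θ₀
end
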